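/- arXiv:1311.2974 — 5 statements merged into one kernel-verified Lean document; each statement's English description precedes it below -/
import Mathlib

section
/- In the category of simple graphs, there exists an epimorphism e and a commutative two-square diagram in which the left square and the outer square are pullbacks along e, but the right square is not a pullback. Concretely, let e : |2| → 2 be the injective-on-nodes homomorphism from the discrete two-node graph |2| to the single-edge graph 2; then in the diagram with top row |2| --id--> |2| --e--> 2, bottom row |2| --e--> 2 --id--> 2, and vertical maps id, e, id, the left and outer squares are pullbacks but the right square is not. -/
open CategoryTheory

/-- The category of simple graphs and graph homomorphisms. -/
structure SGraph : Type 1 where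
  V : Type
  G : SimpleGraph V

instance : Category SGraph where
  Hom A B := A.G →g B.G
  id A := SimpleGraph.Hom.id
  comp f g := g.comp f

/-- `|2|`: the discrete graph on two vertices. -/
def D2 : SGraph := ⟨Bool, ⊥⟩

/-- `2`: the graph with two vertices joined by a single edge. -/
def K2 : SGraph := ⟨Bool, ⊤⟩

/-- The identity-on-vertices homomorphism `e : |2| → 2`. -/
def e : D2 ⟶ K2 := ⟨id, fun h => h.elim⟩

/-! `e` is a bijection on vertices, hence both a monomorphism and an epimorphism, but it is not an
isomorphism since no homomorphism `2 → |2|` can send the edge to an edge. Being mono, `e` has the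
trivial kernel pair, which is the left square, and the outer square has isomorphisms on two opposite
sides. If the right square were a pullback, `e` would be a pullback of the isomorphism `𝟙 2`, hence
an isomorphism itself. -/

namespace SGraph

variable {A B Z : SGraph}

lemma hom_ext {f g : A ⟶ B} (h : ∀ v, f.toFun v = g.toFun v) : f = g :=
  RelHom.ext h

lemma comp_toFun (f : A ⟶ B) (g : B ⟶ Z) (v : A.V) : (f ≫ g).toFun v = g.toFun (f.toFun v) :=
  rfl

lemma epi_of_surjective (f : A ⟶ B) (hf : Function.Surjective f.toFun) : Epi f where
  left_cancellation {W} g h hgh := hom_ext fun v => by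
    obtain ⟨u, rfl⟩ := hf v
    simpa only [comp_toFun] using congrArg (fun k : A ⟶ W => k.toFun u) hgh

lemma mono_of_injective (f : A ⟶ B) (hf : Function.Injective f.toFun) : Mono f where
  right_cancellation {W} _ _ hgh := hom_ext fun v =>
    hf (congrArg (fun k : W ⟶ B => k.toFun v) hgh)

lemma isEmpty_hom_of_adj (hB : B.G = ⊥) {u v : A.V} (huv : A.G.Adj u v) : IsEmpty (A ⟶ B) :=
  ⟨fun f => by simpa [hB] using f.map_adj huv⟩

end SGraph

instance : Epi e := SGraph.epi_of_surjective e Function.surjective_id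

instance : Mono e := SGraph.mono_of_injective e Function.injective_id

lemma not_isIso_e : ¬ IsIso e := fun _ =>
  (SGraph.isEmpty_hom_of_adj (A := K2) rfl (show K2.G.Adj true false by simp [K2])).false (inv e)

/-- **Counterexample to the other pullback lemma in simple graphs.**
The morphism `e : |2| → 2` is an epimorphism, and in the diagram with top row
`|2| --id--> |2| --e--> 2`, bottom row `|2| --e--> 2 --id--> 2` and vertical maps
`id, e, id`, the left square and the outer square are pullbacks, but the right
square is not a pullback. -/
theorem graph_counterexample_to_other_pullback_lemma :
    Epi e ∧
    IsPullback (𝟙 D2) (𝟙 D2) e e ∧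
    IsPullback (𝟙 D2 ≫ e) (𝟙 D2) (𝟙 K2) (e ≫ 𝟙 K2) ∧
    ¬ IsPullback e e (𝟙 K2) (𝟙 K2) :=
  ⟨inferInstance, IsKernelPair.id_of_mono e, IsPullback.of_vert_isIso ⟨by simp⟩,
    fun h => not_isIso_e h.isIso_fst_of_isIso⟩
end

section
/- Let B be a category and e : X → Y a morphism such that all pullbacks along e exist. If in every commutative two-square diagram whose bottom-left edge is e, the pullback property of the left square and the outer square implies the pullback property of the right square (i.e., the other pullback lemma holds along e), then e is an extremal morphism. -/
open CategoryTheory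

/-- A morphism `e` is *extremal* if it factors through no proper subobject:
whenever `e = f ≫ m` with `m` a monomorphism, `m` is an isomorphism. -/
def IsExtremalMor {𝒞 : Type*} [Category 𝒞] {X Y : 𝒞} (e : X ⟶ Y) : Prop :=
  ∀ {A : 𝒞} (f : X ⟶ A) (m : A ⟶ Y), Mono m → f ≫ m = e → IsIso m

/-- The *other pullback lemma* holds along `e : X ⟶ Y` if for every commutative
two-square diagram with bottom-left edge `e` (top row `A ⟶ B ⟶ C`, bottom row
`X --e--> Y ⟶ Z`, verticals `A ⟶ X`, `B ⟶ Y`, `C ⟶ Z`), pullback-ness of the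
left square and of the outer square implies pullback-ness of the right square. -/
def OtherPullbackLemma {𝒞 : Type*} [Category 𝒞] {X Y : 𝒞} (e : X ⟶ Y) : Prop :=
  ∀ {A B C Z : 𝒞} (t₁ : A ⟶ B) (t₂ : B ⟶ C) (f : Y ⟶ Z)
    (vA : A ⟶ X) (vB : B ⟶ Y) (vC : C ⟶ Z),
    t₂ ≫ vC = vB ≫ f →
    IsPullback t₁ vA vB e →
    IsPullback (t₁ ≫ t₂) vA vC (e ≫ f) →
    IsPullback t₂ vB vC f

theorem extremal_of_otherPullbackLemma_general {𝒞 : Type*} [Category 𝒞] {X Y : 𝒞}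
    (e : X ⟶ Y) (hopl : OtherPullbackLemma e) : IsExtremalMor e := by
  intro A f m _ hfm
  -- Paste `f, 𝟙 X, m, e` with `m, m, 𝟙 Y, 𝟙 Y`: the outer square has identity verticals,
  -- and the right one is a pullback only if `m` is an isomorphism.
  have hleft : IsPullback f (𝟙 X) m e := .of_vert_isIso_mono ⟨by simp [hfm]⟩
  have houter : IsPullback (f ≫ m) (𝟙 X) (𝟙 Y) (e ≫ 𝟙 Y) := .of_vert_isIso ⟨by simp [hfm]⟩
  have hright : IsPullback m m (𝟙 Y) (𝟙 Y) := hopl f m (𝟙 Y) (𝟙 X) m (𝟙 Y) rfl hleft houter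
  exact hright.isIso_fst_of_isIso

/-- If all pullbacks along `e` exist and the other pullback lemma holds along
`e`, then `e` is an extremal morphism. -/
theorem extremal_of_otherPullbackLemma {𝒞 : Type*} [Category 𝒞] {X Y : 𝒞}
    (e : X ⟶ Y) (hpb : ∀ {Z : 𝒞} (f : Z ⟶ Y), Limits.HasPullback f e)
    (hopl : OtherPullbackLemma e) : IsExtremalMor e :=
  extremal_of_otherPullbackLemma_general e hopl
end

section
/- In a category with pullbacks, a morphism e : X → Y satisfies the other pullback lemma if and only if e is an extremal morphism stable under pullbacks (equivalently, a strong morphism stable under pullbacks). -/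
open CategoryTheory

/-- A morphism `e : X ⟶ Y` is *strong* (left orthogonal to monomorphisms) if every
commutative square `e ≫ g = f ≫ m` with `m` a monomorphism admits a unique
diagonal `d : Y ⟶ A` with `e ≫ d = f` and `d ≫ m = g`. -/
def IsStrongMor {𝒞 : Type*} [Category 𝒞] {X Y : 𝒞} (e : X ⟶ Y) : Prop :=
  ∀ {A B : 𝒞} (f : X ⟶ A) (g : Y ⟶ B) (m : A ⟶ B), Mono m → e ≫ g = f ≫ m →
    ∃! d : Y ⟶ A, e ≫ d = f ∧ d ≫ m = g

/-- `e` is extremal (resp. strong) *stable under pullbacks* if every pullback of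
`e` along any morphism is extremal (resp. strong). -/
def StablyExtremal {𝒞 : Type*} [Category 𝒞] {X Y : 𝒞} (e : X ⟶ Y) : Prop :=
  ∀ {P Z : 𝒞} (f : Z ⟶ Y) (p₁ : P ⟶ X) (p₂ : P ⟶ Z),
    IsPullback p₁ p₂ e f → IsExtremalMor p₂

def StablyStrong {𝒞 : Type*} [Category 𝒞] {X Y : 𝒞} (e : X ⟶ Y) : Prop :=
  ∀ {P Z : 𝒞} (f : Z ⟶ Y) (p₁ : P ⟶ X) (p₂ : P ⟶ Z),
    IsPullback p₁ p₂ e f → IsStrongMor p₂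

/-!
With pullbacks, strong and extremal morphisms coincide, so only the extremal case matters.

A pullback `p₂ : P ⟶ Z` of `e` along `f` that factors as `g ≫ m` through a mono `m` yields a
two-square diagram whose left square (over `e`) and outer square are pullbacks, while the right
square has `m` on top and `𝟙 Y` at the bottom; the other pullback lemma makes it a pullback, so
`m` is an iso.

Conversely, let `u : B ⟶ pullback f vC` compare the right square with the pullback. Pulling `e`
back along one projection of the kernel pair of `u` gives an extremal map equalizing both
projections (by uniqueness of maps into the outer pullback), which forces the diagonal of `u` to
be an iso, i.e. `u` to be mono. Pulling `e` back along `pullback.fst f vC` gives an extremal map factoring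
through `u` (via the outer pullback), so `u` is an iso.
-/

open CategoryTheory Limits

section

variable {𝒞 : Type*} [Category 𝒞]

theorem IsStrongMor.isExtremalMor {X Y : 𝒞} {k : X ⟶ Y} (h : IsStrongMor k) :
    IsExtremalMor k := by
  intro A f m hm hfac
  obtain ⟨d, ⟨-, hd⟩, -⟩ := h f (𝟙 Y) m hm (by rw [Category.comp_id, hfac])
  exact ⟨⟨d, by rw [← cancel_mono m, Category.assoc, hd, Category.comp_id, Category.id_comp], hd⟩⟩

theorem IsExtremalMor.isStrongMor [HasPullbacks 𝒞] {X Y : 𝒞} {k : X ⟶ Y}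
    (h : IsExtremalMor k) : IsStrongMor k := by
  intro A B f g m hm comm
  have hP := IsPullback.of_hasPullback g m
  have hfac : pullback.lift k f comm ≫ pullback.fst g m = k := pullback.lift_fst _ _ _
  have : IsIso (pullback.fst g m) := h _ _ (hP.mono_fst_of_mono hm) hfac
  refine ⟨inv (pullback.fst g m) ≫ pullback.snd g m, ⟨?_, ?_⟩, fun d ⟨_, hd⟩ => ?_⟩
  · rw [← hfac, Category.assoc, IsIso.hom_inv_id_assoc, pullback.lift_snd]
  · rw [Category.assoc, ← pullback.condition, IsIso.inv_hom_id_assoc]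
  · rw [← cancel_mono m, hd, Category.assoc, ← pullback.condition, IsIso.inv_hom_id_assoc]

theorem IsExtremalMor.mono_of_fst_eq_snd {B Q S : 𝒞} {u : B ⟶ Q} [HasPullback u u]
    {σ : S ⟶ pullback u u} (hσ : IsExtremalMor σ)
    (h : σ ≫ pullback.fst u u = σ ≫ pullback.snd u u) : Mono u := by
  rw [← pullback.isIso_diagonal_iff]
  exact hσ (σ ≫ pullback.fst u u) _ inferInstance (by ext <;> simp [h])

theorem CategoryTheory.IsPullback.hom_ext_of_paste_horiz {A B C X Y Z W : 𝒞}
    {t₁ : A ⟶ B} {t₂ : B ⟶ C} {vA : A ⟶ X} {vB : B ⟶ Y} {vC : C ⟶ Z} {e : X ⟶ Y} {f : Y ⟶ Z}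
    (hL : IsPullback t₁ vA vB e) (hO : IsPullback (t₁ ≫ t₂) vA vC (e ≫ f))
    {x y : W ⟶ B} (z : W ⟶ X) (hx : x ≫ vB = z ≫ e) (hy : y ≫ vB = z ≫ e)
    (ht : x ≫ t₂ = y ≫ t₂) : x = y := by
  have hlift : hL.lift x z hx = hL.lift y z hy :=
    hO.hom_ext (by simpa only [← Category.assoc, hL.lift_fst]) (by simp)
  rw [← hL.lift_fst x z hx, hlift, hL.lift_fst]

variable {X Y : 𝒞} {e : X ⟶ Y}

theorem StablyExtremal.stablyStrong [HasPullbacks 𝒞] (h : StablyExtremal e) :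
    StablyStrong e :=
  fun f p₁ p₂ hP => IsExtremalMor.isStrongMor (h f p₁ p₂ hP)

theorem StablyStrong.stablyExtremal (h : StablyStrong e) : StablyExtremal e :=
  fun f p₁ p₂ hP => IsStrongMor.isExtremalMor (h f p₁ p₂ hP)

theorem OtherPullbackLemma.stablyExtremal (h : OtherPullbackLemma e) : StablyExtremal e := by
  intro P Z f p₁ p₂ hP A g m hm hfac
  have hLeft : IsPullback g p₁ (m ≫ f) e := by
    simpa using (IsPullback.of_vert_isIso_mono (snd := 𝟙 P) ⟨by simp [hfac]⟩).paste_vert hP.flip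
  have hOuter : IsPullback (g ≫ m) p₁ f (e ≫ 𝟙 Y) := by
    simpa [hfac] using hP.flip
  exact (h g m (𝟙 Y) p₁ (m ≫ f) f (Category.comp_id _).symm hLeft hOuter).isIso_fst_of_isIso

variable [HasPullbacks 𝒞] {A B C Z : 𝒞} {t₁ : A ⟶ B} {t₂ : B ⟶ C} {f : Y ⟶ Z}
  {vA : A ⟶ X} {vB : B ⟶ Y} {vC : C ⟶ Z}

theorem StablyExtremal.mono_pullback_lift (h : StablyExtremal e) (comm : t₂ ≫ vC = vB ≫ f)
    (hL : IsPullback t₁ vA vB e) (hO : IsPullback (t₁ ≫ t₂) vA vC (e ≫ f)) :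
    Mono (pullback.lift vB t₂ comm.symm) := by
  set u := pullback.lift vB t₂ comm.symm
  have hk : pullback.fst u u ≫ u = pullback.snd u u ≫ u := pullback.condition
  have hvB : pullback.fst u u ≫ vB = pullback.snd u u ≫ vB := by
    simpa only [Category.assoc, u, pullback.lift_fst] using hk =≫ pullback.fst f vC
  have ht₂ : pullback.fst u u ≫ t₂ = pullback.snd u u ≫ t₂ := by
    simpa only [Category.assoc, u, pullback.lift_snd] using hk =≫ pullback.snd f vC
  have hσ := IsPullback.of_hasPullback e (pullback.fst u u ≫ vB)
  refine IsExtremalMor.mono_of_fst_eq_snd (h _ _ _ hσ)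
    (hL.hom_ext_of_paste_horiz hO (pullback.fst _ _) ?_ ?_ (by simp only [Category.assoc, ht₂]))
  · simpa only [Category.assoc] using hσ.w.symm
  · simpa only [Category.assoc, ← hvB] using hσ.w.symm

theorem StablyExtremal.isIso_pullback_lift (h : StablyExtremal e) (comm : t₂ ≫ vC = vB ≫ f)
    (hL : IsPullback t₁ vA vB e) (hO : IsPullback (t₁ ≫ t₂) vA vC (e ≫ f)) :
    IsIso (pullback.lift vB t₂ comm.symm) := by
  have hρ := IsPullback.of_hasPullback e (pullback.fst f vC)
  have hw : (pullback.snd e (pullback.fst f vC) ≫ pullback.snd f vC) ≫ vC =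
      pullback.fst e (pullback.fst f vC) ≫ e ≫ f := by
    rw [Category.assoc, ← pullback.condition, ← Category.assoc, ← hρ.w, Category.assoc]
  refine h _ _ _ hρ (hO.lift _ _ hw ≫ t₁) _ (StablyExtremal.mono_pullback_lift h comm hL hO) ?_
  apply pullback.hom_ext
  · rw [Category.assoc, pullback.lift_fst, Category.assoc, hL.w, ← Category.assoc,
      hO.lift_snd, hρ.w]
  · simp only [Category.assoc, pullback.lift_snd]
    exact hO.lift_fst _ _ _

theorem StablyExtremal.otherPullbackLemma (h : StablyExtremal e) : OtherPullbackLemma e := by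
  intro A B C Z t₁ t₂ f vA vB vC comm hL hO
  have := StablyExtremal.isIso_pullback_lift h comm hL hO
  exact (IsPullback.of_iso_pullback ⟨comm.symm⟩ (asIso (pullback.lift vB t₂ comm.symm))
    (pullback.lift_fst _ _ _) (pullback.lift_snd _ _ _)).flip

end

/-- **The other pullback lemma (main theorem).** In a category with pullbacks, a
morphism `e : X ⟶ Y` satisfies the other pullback lemma iff `e` is an extremal
morphism stable under pullbacks, equivalently iff `e` is a strong morphism
stable under pullbacks. -/
theorem otherPullbackLemma_iff {𝒞 : Type*} [Category 𝒞] [Limits.HasPullbacks 𝒞]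
    {X Y : 𝒞} (e : X ⟶ Y) :
    (OtherPullbackLemma e ↔ StablyExtremal e) ∧
    (OtherPullbackLemma e ↔ StablyStrong e) :=
  ⟨⟨OtherPullbackLemma.stablyExtremal, StablyExtremal.otherPullbackLemma⟩,
    ⟨fun h => StablyExtremal.stablyStrong (OtherPullbackLemma.stablyExtremal h),
      fun h => StablyExtremal.otherPullbackLemma (StablyStrong.stablyExtremal h)⟩⟩
end

section
/- In a balanced regular category, a morphism e satisfies the other pullback lemma if and only if e is an epimorphism. -/
open CategoryTheory

/-- A *regular category*: finitely complete, every morphism factors as an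
extremal morphism followed by a monomorphism, and extremal morphisms are stable
under pullback. -/
structure RegularCat (𝒞 : Type*) [Category 𝒞] : Prop where
  hasFiniteLimits : Limits.HasFiniteLimits 𝒞
  factor : ∀ {X Y : 𝒞} (f : X ⟶ Y), ∃ (I : 𝒞) (q : X ⟶ I) (m : I ⟶ Y),
    IsExtremalMor q ∧ Mono m ∧ q ≫ m = f
  extremal_stable : ∀ {P X Y Z : 𝒞} (q : X ⟶ Y) (f : Z ⟶ Y) (p₁ : P ⟶ X)
    (p₂ : P ⟶ Z), IsExtremalMor q → IsPullback p₁ p₂ q f → IsExtremalMor p₂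

/-!
If the other pullback lemma holds along `e`, apply it to the image factorization `e = q ≫ m`:
the square with top `q`, bottom `e` and right side `m` is a pullback because `m` is mono, the
outer square is trivially one, so the right square exhibits `I` as the pullback of `𝟙 Y` along
itself, i.e. `m` is an isomorphism, and `e` is epi because the extremal `q` is.

Conversely, let `e` be epi, hence extremal as the category is balanced. Compare `B` with
`P = Y ×_Z C` through `u : B ⟶ P`. The outer and left squares say that `t₁ ≫ u : A ⟶ P` is the
base change of `e`, so it is a pullback-stable epimorphism, and that the base change of `u`
along it is `𝟙 A`. Isomorphisms descend along pullback-stable epimorphisms, so `u` is an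
isomorphism and the right square is a pullback.
-/

open Limits

section

variable {𝒞 : Type*} [Category 𝒞]

lemma IsExtremalMor.epi [HasEqualizers 𝒞] {X Y : 𝒞} {q : X ⟶ Y} (hq : IsExtremalMor q) :
    Epi q :=
  (ExtremalEpi.mk_of_hasEqualizers q fun _ p i fac _ => hq p i inferInstance fac).toEpi

lemma isExtremalMor_of_epi [Balanced 𝒞] {X Y : 𝒞} {e : X ⟶ Y} [Epi e] : IsExtremalMor e := by
  intro A f m _ hfm
  have : Epi m := by
    subst hfm
    exact epi_of_epi f m
  exact isIso_of_mono_of_epi m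

lemma RegularCat.universally_epi_of_isExtremalMor (hreg : RegularCat 𝒞) {X Y : 𝒞}
    {q : X ⟶ Y} (hq : IsExtremalMor q) : (MorphismProperty.epimorphisms 𝒞).universally q := by
  have := hreg.hasFiniteLimits
  intro X' Y' i₁ i₂ q' h
  exact IsExtremalMor.epi (hreg.extremal_stable q i₂ i₁ q' hq h.flip)

namespace CategoryTheory.IsPullback

variable [HasPullbacks 𝒞] {P X Y Z : 𝒞} {fst : P ⟶ X} {snd : P ⟶ Y} {f : X ⟶ Z} {g : Y ⟶ Z}

lemma mono_of_universally_epi (h : IsPullback fst snd f g) [Mono fst]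
    (hf : (MorphismProperty.epimorphisms 𝒞).universally f) : Mono g := by
  refine ⟨fun {W} a b hab => ?_⟩
  have : Epi (pullback.snd f (a ≫ g)) := hf _ _ _ (IsPullback.of_hasPullback f (a ≫ g)).flip
  rw [← cancel_epi (pullback.snd f (a ≫ g))]
  have wa : pullback.fst f (a ≫ g) ≫ f = (pullback.snd f (a ≫ g) ≫ a) ≫ g := by
    simp [pullback.condition]
  have wb : pullback.fst f (a ≫ g) ≫ f = (pullback.snd f (a ≫ g) ≫ b) ≫ g := by
    simp [pullback.condition, hab]
  have hlift : h.lift _ _ wa = h.lift _ _ wb := by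
    rw [← cancel_mono fst, h.lift_fst, h.lift_fst]
  rw [← h.lift_snd _ _ wa, hlift, h.lift_snd]

lemma isIso_of_universally_epi [Balanced 𝒞] (h : IsPullback fst snd f g) [IsIso fst]
    (hf : (MorphismProperty.epimorphisms 𝒞).universally f) : IsIso g := by
  have := h.mono_of_universally_epi hf
  have : Epi f := MorphismProperty.universally_le _ _ hf
  have : Epi (snd ≫ g) := h.w ▸ epi_comp fst f
  have := epi_of_epi snd g
  exact isIso_of_mono_of_epi g

end CategoryTheory.IsPullback

lemma RegularCat.epi_of_otherPullbackLemma (hreg : RegularCat 𝒞) {X Y : 𝒞} {e : X ⟶ Y}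
    (he : OtherPullbackLemma e) : Epi e := by
  have := hreg.hasFiniteLimits
  obtain ⟨I, q, m, hq, hm, rfl⟩ := hreg.factor e
  have hleft : IsPullback q (𝟙 X) m (q ≫ m) := by
    simpa using (IsPullback.id_vert q).paste_horiz ((mono_iff_isPullback m).mp hm)
  have houter : IsPullback (q ≫ m) (𝟙 X) (𝟙 Y) ((q ≫ m) ≫ 𝟙 Y) := by
    simpa using IsPullback.id_vert (q ≫ m)
  have hright : IsPullback m m (𝟙 Y) (𝟙 Y) := he q m (𝟙 Y) (𝟙 X) m (𝟙 Y) (by simp) hleft houter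
  have := hright.isIso_fst_of_isIso
  have := IsExtremalMor.epi hq
  exact epi_comp q m

lemma RegularCat.otherPullbackLemma_of_epi [Balanced 𝒞] (hreg : RegularCat 𝒞) {X Y : 𝒞}
    {e : X ⟶ Y} [Epi e] : OtherPullbackLemma e := by
  have := hreg.hasFiniteLimits
  intro A B C Z t₁ t₂ f vA vB vC hcomm hleft houter
  obtain ⟨u, hu₁, hu₂⟩ := pullback.lift' vB t₂ hcomm.symm
  have hbase : IsPullback vA (t₁ ≫ u) e (pullback.fst f vC) :=
    IsPullback.of_bot (by simpa [hu₂] using houter.flip) (by simp [hu₁, hleft.w])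
      (IsPullback.of_hasPullback f vC)
  have hsquare : IsPullback (𝟙 A) t₁ (t₁ ≫ u) u :=
    IsPullback.of_right (by simpa [hu₁] using hleft.flip) (by simp) hbase
  have : IsIso u := hsquare.isIso_of_universally_epi
    (hreg.universally_epi_of_isExtremalMor
      (hreg.extremal_stable _ _ _ _ isExtremalMor_of_epi hbase))
  exact (IsPullback.of_iso_pullback ⟨hcomm.symm⟩ (asIso u) hu₁ hu₂).flip

end

/-- In a balanced regular category, a morphism `e` satisfies the other pullback
lemma if and only if `e` is an epimorphism. -/
theorem otherPullbackLemma_iff_epi {𝒞 : Type*} [Category 𝒞] [Balanced 𝒞]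
    (hreg : RegularCat 𝒞) {X Y : 𝒞} (e : X ⟶ Y) :
    OtherPullbackLemma e ↔ Epi e :=
  ⟨hreg.epi_of_otherPullbackLemma, fun _ => hreg.otherPullbackLemma_of_epi⟩
end

section
/- Let p : C → B be a fibration and e : X → Y a morphism in B. The reindexing functor e* : p_Y → p_X is conservative if and only if e is p-conservative, i.e., every cartesian lifting of e is conservatively cartesian (for every c with appropriate codomain, c composed with the lifting is cartesian iff c is cartesian). -/
/-!
`PCartesian p φ` is Mathlib's `IsStronglyCartesian p (p.map φ) φ`, which supplies the calculus of
cartesian arrows. For a vertical `v : A ⟶ B` over `Y`, naturality gives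
`lift A ≫ v = E⋆ v ≫ lift B`, so `lift A ≫ v` is cartesian iff the vertical arrow `E⋆ v` is,
i.e. iff `E⋆ v` is invertible. In a fibration every `c` out of `A` factors as a vertical `v`
followed by a cartesian arrow, so `c` is cartesian iff `v` is invertible; and every cartesian
lift of `e` at `A` is `lift A` up to a vertical isomorphism. Comparing the two criteria gives
both directions.
-/

open CategoryTheory CategoryTheory.Functor

/-- A morphism `f : A ⟶ B` in `𝒞` is *`p`-cartesian* if for every `g : X ⟶ B` in
`𝒞` and every factorization `p(g) = k ≫ p(f)` in the base, there is exactly one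
`h : X ⟶ A` with `p(h) = k` and `h ≫ f = g`. -/
def PCartesian {𝒞 ℬ : Type*} [Category 𝒞] [Category ℬ] (p : 𝒞 ⥤ ℬ)
    {A B : 𝒞} (f : A ⟶ B) : Prop :=
  ∀ {X : 𝒞} (g : X ⟶ B) (k : p.obj X ⟶ p.obj A), p.map g = k ≫ p.map f →
    ∃! h : X ⟶ A, p.map h = k ∧ h ≫ f = g

section

variable {𝒞 ℬ : Type*} [Category 𝒞] [Category ℬ] {p : 𝒞 ⥤ ℬ}

theorem pCartesian_iff_isStronglyCartesian_map {A B : 𝒞} (φ : A ⟶ B) :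
    PCartesian p φ ↔ p.IsStronglyCartesian (p.map φ) φ := by
  refine ⟨fun hφ => ⟨fun k g _ => ?_⟩, fun hφ X g k hk => ?_⟩
  · obtain ⟨h, ⟨hk, hg⟩, huniq⟩ := hφ g k (IsHomLift.eq_of_isHomLift p _ g).symm
    exact ⟨h, ⟨hk ▸ inferInstance, hg⟩,
      fun h' ⟨_, hh'⟩ => huniq h' ⟨(IsHomLift.eq_of_isHomLift p k h').symm, hh'⟩⟩
  · have : p.IsHomLift (k ≫ p.map φ) g := hk ▸ inferInstance
    obtain ⟨h, ⟨_, hg⟩, huniq⟩ := hφ.universal_property' k g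
    exact ⟨h, ⟨(IsHomLift.eq_of_isHomLift p k h).symm, hg⟩,
      fun h' ⟨hk', hh'⟩ => huniq h' ⟨hk' ▸ inferInstance, hh'⟩⟩

theorem pCartesian_iff_isStronglyCartesian {R S : ℬ} (f : R ⟶ S) {A B : 𝒞} (φ : A ⟶ B)
    [p.IsHomLift f φ] : PCartesian p φ ↔ p.IsStronglyCartesian f φ := by
  subst_hom_lift p f φ
  exact pCartesian_iff_isStronglyCartesian_map φ

namespace PCartesian

theorem comp {A B C : 𝒞} {f : A ⟶ B} {g : B ⟶ C} (hf : PCartesian p f) (hg : PCartesian p g) :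
    PCartesian p (f ≫ g) := by
  rw [pCartesian_iff_isStronglyCartesian_map] at hf hg
  rw [pCartesian_iff_isStronglyCartesian (p.map f ≫ p.map g)]
  infer_instance

theorem of_comp {A B C : 𝒞} {f : A ⟶ B} {g : B ⟶ C} (hfg : PCartesian p (f ≫ g))
    (hg : PCartesian p g) : PCartesian p f := by
  rw [pCartesian_iff_isStronglyCartesian (p.map f ≫ p.map g)] at hfg
  rw [pCartesian_iff_isStronglyCartesian_map] at hg ⊢
  exact IsStronglyCartesian.of_comp p (g := p.map g) (ψ := g)

theorem of_isIso {A B : 𝒞} (f : A ⟶ B) [IsIso f] : PCartesian p f :=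
  (pCartesian_iff_isStronglyCartesian_map f).2 inferInstance

theorem isIso_of_base_isIso {R S : ℬ} (f : R ⟶ S) [IsIso f] {A B : 𝒞} {φ : A ⟶ B} [p.IsHomLift f φ]
    (hφ : PCartesian p φ) : IsIso φ := by
  rw [pCartesian_iff_isStronglyCartesian f] at hφ
  exact IsStronglyCartesian.isIso_of_base_isIso p f φ

theorem isIso_comp_iff {A A' B : 𝒞} (u : A' ⟶ A) [IsIso u] (f : A ⟶ B) :
    PCartesian p (u ≫ f) ↔ PCartesian p f := by
  refine ⟨fun h => ?_, comp (of_isIso u)⟩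
  have h' : PCartesian p (inv u ≫ u ≫ f) := comp (of_isIso (inv u)) h
  rwa [IsIso.inv_hom_id_assoc] at h'

theorem exists_isIso_comp_eq {R S : ℬ} (f : R ⟶ S) {A A' B : 𝒞} {φ : A ⟶ B} {φ' : A' ⟶ B}
    [p.IsHomLift f φ] [p.IsHomLift f φ'] (hφ : PCartesian p φ) (hφ' : PCartesian p φ') :
    ∃ u : A' ⟶ A, IsIso u ∧ u ≫ φ = φ' := by
  rw [pCartesian_iff_isStronglyCartesian f] at hφ hφ'
  exact ⟨_, inferInstance, IsCartesian.domainUniqueUpToIso_hom p f φ φ' ▸ IsCartesian.fac p f φ φ'⟩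

end PCartesian

instance {S : ℬ} : (Fiber.fiberInclusion : Fiber p S ⥤ 𝒞).ReflectsIsomorphisms where
  reflects {A B} v _ := by
    have : IsIso v.val := ‹IsIso (Fiber.fiberInclusion.map v)›
    have := v.2
    exact ⟨Fiber.homMk p S (inv v.val), by ext; exact IsIso.hom_inv_id v.val,
      by ext; exact IsIso.inv_hom_id v.val⟩

instance {S : ℬ} {A B : Fiber p S} (v : A ⟶ B) [IsIso v] : IsIso v.val :=
  inferInstanceAs (IsIso (Fiber.fiberInclusion.map v))

theorem Fiber.pCartesian_val_iff_isIso {S : ℬ} {A B : Fiber p S} (v : A ⟶ B) :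
    PCartesian p v.val ↔ IsIso v := by
  have := v.2
  refine ⟨fun hv => ?_, fun _ => ?_⟩
  · have : IsIso (Fiber.fiberInclusion.map v) := hv.isIso_of_base_isIso (𝟙 S)
    exact isIso_of_reflects_iso v Fiber.fiberInclusion
  · apply PCartesian.of_isIso

theorem exists_fiber_hom_comp_pCartesian_eq
    (hfib : ∀ {Z W : ℬ} (j : Z ⟶ W) (A : 𝒞), p.obj A = W →
      ∃ (A' : 𝒞) (φ : A' ⟶ A), IsHomLift p j φ ∧ PCartesian p φ)
    {S : ℬ} (A : Fiber p S) {Z : 𝒞} (c : A.1 ⟶ Z) :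
    ∃ (B : Fiber p S) (v : A ⟶ B) (ψ : B.1 ⟶ Z), PCartesian p ψ ∧ v.val ≫ ψ = c := by
  have hc : p.IsHomLift (eqToHom A.2.symm ≫ p.map c) c := inferInstance
  generalize eqToHom A.2.symm ≫ p.map c = j at hc
  obtain ⟨B, ψ, _, hψ⟩ := hfib j Z (IsHomLift.codomain_eq p j c)
  rw [pCartesian_iff_isStronglyCartesian j ψ] at hψ
  exact ⟨⟨B, IsHomLift.domain_eq p j ψ⟩,
    ⟨IsStronglyCartesian.map p j ψ (Category.id_comp j).symm c, inferInstance⟩, ψ,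
    (pCartesian_iff_isStronglyCartesian j ψ).2 hψ,
    IsStronglyCartesian.fac p j ψ (Category.id_comp j).symm c⟩

theorem pCartesian_comp_val_iff_isIso_map {X Y : ℬ} {Estar : Fiber p Y ⥤ Fiber p X}
    {lift : ∀ A : Fiber p Y, (Estar.obj A).1 ⟶ A.1} (lift_cart : ∀ A, PCartesian p (lift A))
    (lift_nat : ∀ {A A' : Fiber p Y} (f : A ⟶ A'),
      lift A ≫ f.val = (Estar.map f).val ≫ lift A')
    {A B : Fiber p Y} (v : A ⟶ B) :
    PCartesian p (lift A ≫ v.val) ↔ IsIso (Estar.map v) := by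
  rw [lift_nat, ← Fiber.pCartesian_val_iff_isIso]
  exact ⟨fun h => h.of_comp (lift_cart B), fun h => h.comp (lift_cart B)⟩

end

/-- **Conservative reindexing vs. conservatively cartesian liftings.**
Let `p : 𝒞 ⥤ ℬ` be a fibration (every morphism of `ℬ` has cartesian liftings),
`e : X ⟶ Y` a morphism of `ℬ`, and `E⋆ : p_Y ⥤ p_X` a reindexing functor along
`e`, i.e. a functor between the fibres equipped, for each `A` in the fibre over
`Y`, with a cartesian morphism `lift A : E⋆(A) ⟶ A` lying over `e`, naturally in
`A`. Then `E⋆` is conservative if and only if `e` is `p`-conservative: every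
cartesian lifting `φ` of `e` is conservatively cartesian (for every `c`
composable with it, `φ ≫ c` is cartesian iff `c` is cartesian). -/
theorem reindexing_conservative_iff_conservatively_cartesian
    {𝒞 ℬ : Type*} [Category 𝒞] [Category ℬ] (p : 𝒞 ⥤ ℬ)
    (hfib : ∀ {Z W : ℬ} (j : Z ⟶ W) (A : 𝒞), p.obj A = W →
      ∃ (A' : 𝒞) (φ : A' ⟶ A), IsHomLift p j φ ∧ PCartesian p φ)
    {X Y : ℬ} (e : X ⟶ Y)
    (Estar : Fiber p Y ⥤ Fiber p X)
    (lift : ∀ A : Fiber p Y, (Estar.obj A).1 ⟶ A.1)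
    (lift_homLift : ∀ A : Fiber p Y, IsHomLift p e (lift A))
    (lift_cart : ∀ A : Fiber p Y, PCartesian p (lift A))
    (lift_nat : ∀ {A A' : Fiber p Y} (f : A ⟶ A'),
      lift A ≫ f.val = (Estar.map f).val ≫ lift A') :
    Estar.ReflectsIsomorphisms ↔
      (∀ {A' : 𝒞} {A : Fiber p Y} (φ : A' ⟶ A.1),
        IsHomLift p e φ → PCartesian p φ →
        ∀ {Z : 𝒞} (c : A.1 ⟶ Z), (PCartesian p (φ ≫ c) ↔ PCartesian p c)) := by
  refine ⟨fun _ A' A φ hφe hφ Z c => ⟨fun hφc => ?_, hφ.comp⟩,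
    fun hcons => ⟨fun {A _} f hf => ?_⟩⟩
  · obtain ⟨B, v, ψ, hψ, rfl⟩ := exists_fiber_hom_comp_pCartesian_eq hfib A c
    obtain ⟨u, _, rfl⟩ := PCartesian.exists_isIso_comp_eq e (lift_cart A) hφ
    rw [Category.assoc, PCartesian.isIso_comp_iff u, ← Category.assoc] at hφc
    have : IsIso (Estar.map v) :=
      (pCartesian_comp_val_iff_isIso_map lift_cart lift_nat v).1 (PCartesian.of_comp hφc hψ)
    have : IsIso v := isIso_of_reflects_iso v Estar
    rwa [PCartesian.isIso_comp_iff v.val]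
  · rw [← Fiber.pCartesian_val_iff_isIso]
    exact (hcons (lift A) (lift_homLift A) (lift_cart A) f.val).1
      ((pCartesian_comp_val_iff_isIso_map lift_cart lift_nat f).2 hf)
end
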